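/- arXiv:2009.03218 — 3 statements merged into one kernel-verified Lean document; each statement's English description precedes it below -/
import Mathlib

section
/- Suppose ψ is an n-qubit stabilizer state and y ∈ {0,1}^n satisfies ⟨y|ψ⟩ ≠ 0. If R is a uniformly random element of the stabilizer group Stab(ψ), and z ∈ {0,1}^n is the string such that |z⟩ is proportional to R|y⟩, then z is distributed according to p(z) = |⟨z|ψ⟩|^2. -/
open Matrix

/-- The `n`-qubit operator `X^a Z^b`, acting on computational basis states by
`X^a Z^b |y⟩ = (-1)^{b·y} |y + a⟩`. -/
def XZ {n : ℕ} (a b : Fin n → ZMod 2) :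
    Matrix (Fin n → ZMod 2) (Fin n → ZMod 2) ℂ :=
  Matrix.of fun x y => if x = y + a then (-1 : ℂ) ^ (b ⬝ᵥ y).val else 0

/-- A general `n`-qubit Pauli operator `i^α (-1)^β X^a Z^b`. -/
noncomputable def PauliOp {n : ℕ} (α β : ZMod 2) (a b : Fin n → ZMod 2) :
    Matrix (Fin n → ZMod 2) (Fin n → ZMod 2) ℂ :=
  (Complex.I ^ α.val * (-1 : ℂ) ^ β.val) • XZ a b

/-- Parameters `(α, β, a, b)` of a Pauli operator `i^α (-1)^β X^a Z^b`. -/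
abbrev PauliParam (n : ℕ) :=
  ZMod 2 × ZMod 2 × (Fin n → ZMod 2) × (Fin n → ZMod 2)

noncomputable def PauliOp' {n : ℕ} (q : PauliParam n) :
    Matrix (Fin n → ZMod 2) (Fin n → ZMod 2) ℂ :=
  PauliOp q.1 q.2.1 q.2.2.1 q.2.2.2

/-!
The sum `S = ∑_{P ∈ Stab ψ} P` equals `2^n |ψ⟩⟨ψ|`: it is Hermitian since the group is closed
under adjoints, `S² = 2^n S` since left multiplication permutes the group, `S ψ = 2^n ψ`, and
`tr S = 2^n` since the identity is the only stabilizer proportional to `1` and all other Pauli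
operators are traceless.

A stabilizer `i^α (-1)^β X^a Z^b` sends `|y⟩` to a multiple of `|z⟩` iff `a = y + z`, a condition
symmetric in `y` and `z`; each such `P` satisfies `⟨y|P|z⟩ ψ(z) = ψ(y)`. Summing over them reads
off the `(y, z)` entry of `S`: `#{P} ψ(y) = 2^n ψ(y) |ψ(z)|²`, and `ψ(y) ≠ 0` cancels.
-/

open Finset

theorem neg_one_pow_val_add {R : Type*} [Ring R] (u v : ZMod 2) :
    (-1 : R) ^ (u + v).val = (-1) ^ u.val * (-1) ^ v.val := by
  rw [ZMod.val_add, ← pow_add, ← neg_one_pow_eq_pow_mod_two]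

theorem ZMod.two_cases (x : ZMod 2) : x = 0 ∨ x = 1 := by
  revert x; decide

theorem Pi.zmod_two_add_cancel_left {ι : Type*} (a b : ι → ZMod 2) : a + (a + b) = b :=
  funext fun _ => CharTwo.add_cancel_left _ _

theorem Pi.zmod_two_add_cancel_right {ι : Type*} (a b : ι → ZMod 2) : a + b + b = a :=
  funext fun _ => CharTwo.add_cancel_right _ _

namespace PauliParam

variable {n : ℕ}

-- `X^a Z^b X^a' Z^b' = (-1)^(b⬝a') X^(a+a') Z^(b+b')` and `i^α i^α' = i^(α+α') (-1)^(αα')`.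
def mul : PauliParam n → PauliParam n → PauliParam n
  | (α, β, a, b), (α', β', a', b') => (α + α', β + β' + α * α' + b ⬝ᵥ a', a + a', b + b')

-- The adjoint: `star (i^α) = i^α (-1)^α` and `(X^a Z^b)ᴴ = Z^b X^a = (-1)^(b⬝a) X^a Z^b`.
def inv : PauliParam n → PauliParam n
  | (α, β, a, b) => (α, β + α + b ⬝ᵥ a, a, b)

theorem inv_inv (q : PauliParam n) : inv (inv q) = q := by
  obtain ⟨α, β, a, b⟩ := q
  simp only [inv, Prod.mk.injEq, and_true]
  grind

theorem inv_mul_cancel_left (q r : PauliParam n) : mul (inv q) (mul q r) = r := by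
  obtain ⟨α, β, a, b⟩ := q
  obtain ⟨α', β', a', b'⟩ := r
  have := ZMod.pow_card α
  simp only [inv, mul, Prod.mk.injEq, dotProduct_add, Pi.zmod_two_add_cancel_left, and_true]
  grind

theorem mul_zero (q : PauliParam n) : mul q 0 = q := by
  obtain ⟨α, β, a, b⟩ := q
  simp [mul]

theorem inv_mul_self (q : PauliParam n) : mul (inv q) q = 0 := by
  simpa only [mul_zero] using inv_mul_cancel_left q 0

end PauliParam

noncomputable def pauliPhase (α β : ZMod 2) : ℂ := Complex.I ^ α.val * (-1) ^ β.val

theorem pauliPhase_mul (α β α' β' : ZMod 2) :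
    pauliPhase α β * pauliPhase α' β' = pauliPhase (α + α') (β + β' + α * α') := by
  rcases α.two_cases with rfl | rfl <;> rcases β.two_cases with rfl | rfl <;>
    rcases α'.two_cases with rfl | rfl <;> rcases β'.two_cases with rfl | rfl <;>
    simp [pauliPhase, ZMod.val_one, show (1 + 1 : ZMod 2) = 0 from rfl]

theorem pauliPhase_add_right (α β γ : ZMod 2) :
    pauliPhase α (β + γ) = pauliPhase α β * (-1) ^ γ.val := by
  rw [pauliPhase, pauliPhase, neg_one_pow_val_add, mul_assoc]

theorem star_pauliPhase (α β : ZMod 2) : star (pauliPhase α β) = pauliPhase α (β + α) := by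
  rcases α.two_cases with rfl | rfl <;> rcases β.two_cases with rfl | rfl <;>
    simp [pauliPhase, ZMod.val_one, show (1 + 1 : ZMod 2) = 0 from rfl]

theorem pauliPhase_eq_one_iff {α β : ZMod 2} : pauliPhase α β = 1 ↔ α = 0 ∧ β = 0 := by
  rcases α.two_cases with rfl | rfl <;> rcases β.two_cases with rfl | rfl <;>
    norm_num [pauliPhase, ZMod.val_one, Complex.ext_iff]

variable {n : ℕ}

theorem XZ_apply (a b x w : Fin n → ZMod 2) :
    XZ a b x w = if x = w + a then (-1 : ℂ) ^ (b ⬝ᵥ w).val else 0 :=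
  rfl

theorem XZ_mul_XZ (a b a' b' : Fin n → ZMod 2) :
    XZ a b * XZ a' b' = (-1 : ℂ) ^ (b ⬝ᵥ a').val • XZ (a + a') (b + b') := by
  ext x w
  rw [mul_apply, Finset.sum_eq_single (w + a') (fun u _ hu => by simp [XZ_apply, hu])
    (by simp), Matrix.smul_apply, smul_eq_mul, XZ_apply, XZ_apply, XZ_apply, if_pos rfl,
    add_comm a a', ← add_assoc]
  split_ifs
  · rw [dotProduct_add, add_dotProduct, neg_one_pow_val_add, neg_one_pow_val_add]
    ring
  · simp

theorem conjTranspose_XZ (a b : Fin n → ZMod 2) :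
    (XZ a b)ᴴ = (-1 : ℂ) ^ (b ⬝ᵥ a).val • XZ a b := by
  ext x w
  rw [conjTranspose_apply, Matrix.smul_apply, smul_eq_mul, XZ_apply, XZ_apply]
  by_cases h : x = w + a
  · rw [if_pos (by rw [h, Pi.zmod_two_add_cancel_right]), if_pos h, h, dotProduct_add,
      neg_one_pow_val_add]
    simp [mul_comm]
  · rw [if_neg (fun h' => h (by rw [h', Pi.zmod_two_add_cancel_right])), if_neg h]
    simp

theorem sum_neg_one_pow_dotProduct {ι : Type*} [Fintype ι] [DecidableEq ι] {b : ι → ZMod 2}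
    (hb : b ≠ 0) : ∑ x, (-1 : ℂ) ^ (b ⬝ᵥ x).val = 0 := by
  obtain ⟨i, hi⟩ := Function.ne_iff.mp hb
  have hflip (x : ι → ZMod 2) :
      (-1 : ℂ) ^ (b ⬝ᵥ (x + Pi.single i 1)).val = -(-1) ^ (b ⬝ᵥ x).val := by
    rw [dotProduct_add, dotProduct_single, mul_one, neg_one_pow_val_add,
      (b i).two_cases.resolve_left hi, ZMod.val_one, pow_one, mul_neg_one]
  have hshift := Equiv.sum_comp (Equiv.addRight (Pi.single i 1 : ι → ZMod 2))
    fun x => (-1 : ℂ) ^ (b ⬝ᵥ x).val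
  simp only [Equiv.coe_addRight, hflip, Finset.sum_neg_distrib] at hshift
  exact CharZero.neg_eq_self_iff.mp hshift

theorem XZ_zero_zero : XZ (0 : Fin n → ZMod 2) 0 = 1 := by
  ext x w
  simp [XZ_apply, one_apply]

theorem trace_XZ_eq_zero {a b : Fin n → ZMod 2} (hab : (a, b) ≠ 0) : trace (XZ a b) = 0 := by
  by_cases ha : a = 0
  · subst ha
    have hb : b ≠ 0 := fun hb => hab (by simp [hb])
    simp [trace, XZ_apply, sum_neg_one_pow_dotProduct hb]
  · refine Finset.sum_eq_zero fun x _ => ?_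
    simp [XZ_apply, ha]

theorem PauliOp'_mk (α β : ZMod 2) (a b : Fin n → ZMod 2) :
    PauliOp' (α, β, a, b) = pauliPhase α β • XZ a b :=
  rfl

theorem PauliOp'_zero : PauliOp' (0 : PauliParam n) = 1 := by
  rw [show (0 : PauliParam n) = (0, 0, 0, 0) from rfl, PauliOp'_mk, XZ_zero_zero]
  simp [pauliPhase]

theorem PauliOp'_mul (q r : PauliParam n) :
    PauliOp' (PauliParam.mul q r) = PauliOp' q * PauliOp' r := by
  obtain ⟨α, β, a, b⟩ := q
  obtain ⟨α', β', a', b'⟩ := r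
  rw [PauliParam.mul, PauliOp'_mk, PauliOp'_mk, PauliOp'_mk, smul_mul_smul, XZ_mul_XZ,
    smul_smul, pauliPhase_mul, pauliPhase_add_right]

theorem conjTranspose_PauliOp' (q : PauliParam n) :
    (PauliOp' q)ᴴ = PauliOp' (PauliParam.inv q) := by
  obtain ⟨α, β, a, b⟩ := q
  rw [PauliParam.inv, PauliOp'_mk, PauliOp'_mk, conjTranspose_smul, conjTranspose_XZ, smul_smul,
    star_pauliPhase]
  simp only [pauliPhase_add_right]

theorem conjTranspose_PauliOp'_mul_self (q : PauliParam n) : (PauliOp' q)ᴴ * PauliOp' q = 1 := by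
  rw [conjTranspose_PauliOp', ← PauliOp'_mul, PauliParam.inv_mul_self, PauliOp'_zero]

theorem trace_PauliOp'_mk_zero {α β : ZMod 2} {a b : Fin n → ZMod 2} (hab : (a, b) ≠ 0) :
    trace (PauliOp' (α, β, a, b)) = 0 := by
  rw [PauliOp'_mk, trace_smul, trace_XZ_eq_zero hab, smul_zero]

open scoped ComplexOrder in
theorem Matrix.eq_smul_vecMulVec_star_of_isHermitian {𝕜 ι : Type*} [RCLike 𝕜] [Fintype ι]
    {A : Matrix ι ι 𝕜} {v : ι → 𝕜} {c : ℝ} (hA : A.IsHermitian) (hAA : A * A = (c : 𝕜) • A)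
    (hAv : A *ᵥ v = (c : 𝕜) • v) (htr : A.trace = c) (hv : star v ⬝ᵥ v = 1) :
    A = (c : 𝕜) • vecMulVec v (star v) := by
  set P := vecMulVec v (star v)
  have hPP : P * P = P := by rw [vecMulVec_mul_vecMulVec, hv, one_smul]
  have hAP : A * P = (c : 𝕜) • P := by rw [mul_vecMulVec, hAv, smul_vecMulVec]
  have hPA : P * A = (c : 𝕜) • P := by
    rw [vecMulVec_mul, ← hA.eq, vecMul_conjTranspose, star_star, hAv, star_smul, RCLike.star_def,
      RCLike.conj_ofReal, vecMulVec_smul]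
  set B := A - (c : 𝕜) • P
  have hB : Bᴴ = B := by
    rw [conjTranspose_sub, conjTranspose_smul, hA.eq, conjTranspose_vecMulVec, star_star,
      RCLike.star_def, RCLike.conj_ofReal]
  have hBB : B * B = (c : 𝕜) • B := by
    simp only [B, sub_mul, mul_sub, Matrix.smul_mul, Matrix.mul_smul, hAA, hAP, hPA, hPP]
    module
  have htrB : B.trace = 0 := by
    rw [trace_sub, trace_smul, htr, trace_vecMulVec, dotProduct_comm, hv, smul_eq_mul, mul_one,
      sub_self]
  rw [← sub_eq_zero, ← trace_conjTranspose_mul_self_eq_zero_iff, hB, hBB, trace_smul, htrB,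
    smul_zero]

section Stabilizer

open Classical in
noncomputable def stabilizerParams (ψ : (Fin n → ZMod 2) → ℂ) : Finset (PauliParam n) :=
  Finset.univ.filter fun q => PauliOp' q *ᵥ ψ = ψ

noncomputable def stabilizerSum (ψ : (Fin n → ZMod 2) → ℂ) :
    Matrix (Fin n → ZMod 2) (Fin n → ZMod 2) ℂ :=
  ∑ q ∈ stabilizerParams ψ, PauliOp' q

variable {ψ : (Fin n → ZMod 2) → ℂ}

theorem mem_stabilizerParams {q : PauliParam n} :
    q ∈ stabilizerParams ψ ↔ PauliOp' q *ᵥ ψ = ψ := by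
  simp [stabilizerParams]

theorem zero_mem_stabilizerParams : 0 ∈ stabilizerParams ψ := by
  rw [mem_stabilizerParams, PauliOp'_zero, one_mulVec]

theorem mul_mem_stabilizerParams {q r : PauliParam n} (hq : q ∈ stabilizerParams ψ)
    (hr : r ∈ stabilizerParams ψ) : PauliParam.mul q r ∈ stabilizerParams ψ := by
  rw [mem_stabilizerParams] at *
  rw [PauliOp'_mul, ← mulVec_mulVec, hr, hq]

theorem inv_mem_stabilizerParams {q : PauliParam n} (hq : q ∈ stabilizerParams ψ) :
    PauliParam.inv q ∈ stabilizerParams ψ := by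
  rw [mem_stabilizerParams] at *
  conv_lhs => rw [← hq]
  rw [← conjTranspose_PauliOp', mulVec_mulVec, conjTranspose_PauliOp'_mul_self, one_mulVec]

theorem eq_zero_of_mem_stabilizerParams (hψ : ψ ≠ 0) {α β : ZMod 2}
    (hq : (α, β, 0, 0) ∈ stabilizerParams ψ) : α = 0 ∧ β = 0 := by
  rw [mem_stabilizerParams, PauliOp'_mk, XZ_zero_zero, smul_mulVec, one_mulVec] at hq
  obtain ⟨x, hx⟩ := Function.ne_iff.mp hψ
  refine pauliPhase_eq_one_iff.mp (mul_right_cancel₀ hx ?_)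
  simpa using congrFun hq x

theorem stabilizerSum_mulVec : stabilizerSum ψ *ᵥ ψ = (#(stabilizerParams ψ) : ℂ) • ψ := by
  rw [stabilizerSum, sum_mulVec, Finset.sum_congr rfl fun q hq => mem_stabilizerParams.mp hq,
    sum_const, Nat.cast_smul_eq_nsmul]

theorem stabilizerSum_isHermitian : (stabilizerSum ψ).IsHermitian := by
  rw [IsHermitian, stabilizerSum, conjTranspose_sum]
  exact Finset.sum_nbij' PauliParam.inv PauliParam.inv (fun _ => inv_mem_stabilizerParams)
    (fun _ => inv_mem_stabilizerParams) (fun q _ => PauliParam.inv_inv q)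
    (fun q _ => PauliParam.inv_inv q) (fun q _ => conjTranspose_PauliOp' q)

theorem stabilizerSum_mul_self :
    stabilizerSum ψ * stabilizerSum ψ = (#(stabilizerParams ψ) : ℂ) • stabilizerSum ψ := by
  rw [stabilizerSum, sum_mul_sum, Nat.cast_smul_eq_nsmul, ← sum_const]
  refine Finset.sum_congr rfl fun q hq => ?_
  exact Finset.sum_nbij' (PauliParam.mul q) (PauliParam.mul (PauliParam.inv q))
    (fun _ => mul_mem_stabilizerParams hq)
    (fun _ => mul_mem_stabilizerParams (inv_mem_stabilizerParams hq))
    (fun r _ => PauliParam.inv_mul_cancel_left q r)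
    (fun r _ => by simpa only [PauliParam.inv_inv] using
      PauliParam.inv_mul_cancel_left (PauliParam.inv q) r)
    (fun r _ => (PauliOp'_mul q r).symm)

theorem trace_stabilizerSum (hψ : ψ ≠ 0) : (stabilizerSum ψ).trace = 2 ^ n := by
  rw [stabilizerSum, trace_sum, Finset.sum_eq_single_of_mem 0 zero_mem_stabilizerParams,
    PauliOp'_zero, trace_one]
  · simp
  · rintro ⟨α, β, a, b⟩ hq hq0
    refine trace_PauliOp'_mk_zero fun hab => hq0 ?_
    obtain ⟨rfl, rfl⟩ := Prod.mk_eq_zero.mp hab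
    obtain ⟨rfl, rfl⟩ := eq_zero_of_mem_stabilizerParams hψ hq
    rfl

theorem stabilizerSum_eq_smul_vecMulVec (hcard : #(stabilizerParams ψ) = 2 ^ n)
    (hψ : star ψ ⬝ᵥ ψ = 1) : stabilizerSum ψ = (2 ^ n : ℂ) • vecMulVec ψ (star ψ) := by
  have hψ0 : ψ ≠ 0 := by rintro rfl; simp at hψ
  have h := eq_smul_vecMulVec_star_of_isHermitian (c := 2 ^ n) (stabilizerSum_isHermitian (ψ := ψ))
    (by simp [stabilizerSum_mul_self, hcard]) (by simp [stabilizerSum_mulVec, hcard])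
    (by simp [trace_stabilizerSum hψ0]) hψ
  simpa using h

theorem PauliOp'_apply_eq_zero {q : PauliParam n} {x w : Fin n → ZMod 2} (h : x + q.2.2.1 ≠ w) :
    PauliOp' q x w = 0 := by
  rw [PauliOp'_mk, Matrix.smul_apply, XZ_apply,
    if_neg fun h' => h (by rw [h', Pi.zmod_two_add_cancel_right]), smul_zero]

theorem PauliOp'_apply_mul_of_mem {q : PauliParam n} (hq : q ∈ stabilizerParams ψ)
    (y z : Fin n → ZMod 2) :
    PauliOp' q y z * ψ z = if y + q.2.2.1 = z then ψ y else 0 := by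
  split_ifs with h
  · rw [← congrFun (mem_stabilizerParams.mp hq) y, mulVec, dotProduct,
      Fintype.sum_eq_single z fun w hw => ?_]
    rw [PauliOp'_apply_eq_zero (h ▸ hw.symm), zero_mul]
  · rw [PauliOp'_apply_eq_zero h, zero_mul]

end Stabilizer

open Classical in
/-- Sampling with a random stabilizer: let `ψ` be a normalized `n`-qubit state whose
stabilizer group (parametrized by `(α,β,a,b)`) has exactly `2^n` elements, i.e. a
stabilizer state, and let `y` satisfy `⟨y|ψ⟩ ≠ 0`. A stabilizer `P = i^α(-1)^β X^a Z^b`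
maps `|y⟩` to a multiple of `|z⟩` exactly when `z = y + a`; the number of stabilizers
leading to a given outcome `z`, divided by `2^n`, equals `p(z) = |⟨z|ψ⟩|²`. -/
theorem random_stabilizer_sampling {n : ℕ} (ψ : (Fin n → ZMod 2) → ℂ)
    (hnorm : ∑ z, ‖ψ z‖ ^ 2 = 1)
    (hcard : (Finset.univ.filter fun q : PauliParam n => PauliOp' q *ᵥ ψ = ψ).card = 2 ^ n)
    (y : Fin n → ZMod 2) (hy : ψ y ≠ 0) (z : Fin n → ZMod 2) :
    (((Finset.univ.filter fun q : PauliParam n =>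
        PauliOp' q *ᵥ ψ = ψ ∧ y + q.2.2.1 = z).card : ℝ) : ℝ)
      = 2 ^ n * ‖ψ z‖ ^ 2 := by
  have hψ : star ψ ⬝ᵥ ψ = 1 := by
    simp only [dotProduct, Pi.star_apply, RCLike.star_def, Complex.conj_mul']
    exact_mod_cast hnorm
  have hfilter : (Finset.univ.filter fun q : PauliParam n =>
      PauliOp' q *ᵥ ψ = ψ ∧ y + q.2.2.1 = z) =
      (stabilizerParams ψ).filter fun q => y + q.2.2.1 = z := by
    ext q
    simp [mem_stabilizerParams]
  have key : (#((stabilizerParams ψ).filter fun q => y + q.2.2.1 = z) : ℂ) * ψ y =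
      ((2 ^ n * ‖ψ z‖ ^ 2 : ℝ) : ℂ) * ψ y :=
    calc _ = ∑ q ∈ stabilizerParams ψ, PauliOp' q y z * ψ z := by
          rw [Finset.sum_congr rfl fun q hq => PauliOp'_apply_mul_of_mem hq y z, ← sum_filter,
            sum_const, nsmul_eq_mul]
      _ = stabilizerSum ψ y z * ψ z := by rw [stabilizerSum, Matrix.sum_apply, sum_mul]
      _ = _ := by
          rw [stabilizerSum_eq_smul_vecMulVec hcard hψ]
          simp [vecMulVec_apply, mul_assoc, Complex.conj_mul']
          ring
  rw [hfilter]
  exact_mod_cast mul_right_cancel₀ hy key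
end

section
/- Let G = (V,E) be a graph with n vertices, and let T be a nice tree decomposition of G with O(n) nodes and width t in which every node has at most two children. Then there is a tree decomposition T' of G with at most n/t edges (hence O(n/t) nodes) and width at most 5t, obtained by the following procedure: process nodes bottom-up, contracting each child into its parent whenever the child's bag has at most 2t vertices. -/
/-- A tree decomposition of a graph `G`. -/
structure IsTreeDecomp {V ι : Type} (G : SimpleGraph V) (T : SimpleGraph ι)
    (bags : ι → Finset V) : Prop where
  isTree : T.IsTree
  mem_bag : ∀ v : V, ∃ i, v ∈ bags i
  edge_bag : ∀ u v : V, G.Adj u v → ∃ i, u ∈ bags i ∧ v ∈ bags i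
  subtree : ∀ v : V, (T.induce {i | v ∈ bags i}).Connected

/-!
Root `T` at `r` and contract bottom-up: a node absorbs the merged bag of every child whose merged
bag has at most `2t` vertices. The surviving nodes (the root and the nodes whose merged bag has
more than `2t` vertices) form a tree in which each is attached to the nearest survivor above it.
A merged bag has at most `t + 2 * 2t = 5t` vertices, as every node has at most two children.
For a surviving node `c ≠ r`, more than `t` vertices of its merged bag are missing from the bag
of its parent; by the connectivity of the occurrences of a vertex, such a vertex occurs only
below `c`. These sets are therefore disjoint for distinct `c`, so there are at most `n / t`
surviving non-root nodes.
-/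

open SimpleGraph Finset

namespace SimpleGraph

variable {V V' : Type*}

theorem Connected.of_adj_or_eq_of_surjective {G : SimpleGraph V} {H : SimpleGraph V'}
    (hG : G.Connected) (f : V → V') (hf : Function.Surjective f)
    (hadj : ∀ x y, G.Adj x y → f x = f y ∨ H.Adj (f x) (f y)) : H.Connected := by
  have : Nonempty V' := hG.nonempty.map f
  refine ⟨fun a b => ?_⟩
  obtain ⟨x, rfl⟩ := hf a
  obtain ⟨y, rfl⟩ := hf b
  rw [reachable_iff_reflTransGen]
  refine ((reachable_iff_reflTransGen x y).1 (hG.preconnected x y)).lift' f fun u w huw => ?_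
  rcases hadj u w huw with h | h
  · exact show Relation.ReflTransGen H.Adj (f u) (f w) from h ▸ .refl
  · exact .single h

section ParentMap

variable {α : Type*} (π : α → α) (ρ : α → ℕ) {root : α}

theorem reachable_fromRel_of_parent (hρ : ∀ a ≠ root, ρ (π a) < ρ a) (a : α) :
    (fromRel fun a b => π a = b).Reachable a root := by
  induction h : ρ a using Nat.strong_induction_on generalizing a with
  | _ n ih =>
    by_cases ha : a = root
    · rw [ha]
    have hne : a ≠ π a := fun h => (hρ a ha).ne (congrArg ρ h).symm
    exact ((fromRel_adj _ _ _).2 ⟨hne, .inl rfl⟩).reachable.trans (ih _ (h ▸ hρ a ha) _ rfl)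

theorem isTree_fromRel_of_parent [Finite α] (hroot : π root = root)
    (hρ : ∀ a ≠ root, ρ (π a) < ρ a) : (fromRel fun a b => π a = b).IsTree := by
  classical
  have : Fintype α := Fintype.ofFinite α
  have : Nonempty α := ⟨root⟩
  set P := fromRel fun a b => π a = b
  have hreach := reachable_fromRel_of_parent π ρ hρ
  have hconn : P.Connected := ⟨fun a b => (hreach a).trans (hreach b).symm⟩
  have hedges : P.edgeFinset ⊆ (univ.erase root).image fun a => s(a, π a) := by
    intro e he
    induction e with | _ a b => ?_
    obtain ⟨hab, h | h⟩ := (fromRel_adj _ _ _).1 ((P.mem_edgeSet).1 (mem_edgeFinset.1 he))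
    · refine mem_image.2 ⟨a, mem_erase.2 ⟨fun ha => hab ?_, mem_univ _⟩, by rw [h]⟩
      rw [← h, ha, hroot]
    · refine mem_image.2
        ⟨b, mem_erase.2 ⟨fun hb => hab ?_, mem_univ _⟩, by rw [h, Sym2.eq_swap]⟩
      rw [← h, hb, hroot]
  have hcard : Nat.card P.edgeSet + 1 ≤ Nat.card α := by
    have := (card_le_card hedges).trans card_image_le
    rw [card_erase_of_mem (mem_univ _), card_univ] at this
    rw [Nat.card_eq_fintype_card, Nat.card_eq_fintype_card, ← edgeFinset_card]
    have := Fintype.card_pos (α := α)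
    omega
  exact isTree_iff_connected_and_card.2
    ⟨hconn, le_antisymm hcard hconn.card_vert_le_card_edgeSet_add_one⟩

end ParentMap

namespace IsTree

variable {ι : Type*} {T : SimpleGraph ι} (hT : T.IsTree)

noncomputable def pathToRoot (r i : ι) : T.Walk i r := (hT.existsUnique_path i r).choose

noncomputable def parent (r i : ι) : ι := (hT.pathToRoot r i).getVert 1

noncomputable def depth (r i : ι) : ℕ := (hT.pathToRoot r i).length

theorem isPath_pathToRoot (r i : ι) : (hT.pathToRoot r i).IsPath :=
  (hT.existsUnique_path i r).choose_spec.1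

theorem eq_pathToRoot {r i : ι} {q : T.Walk i r} (hq : q.IsPath) : q = hT.pathToRoot r i :=
  (hT.existsUnique_path i r).choose_spec.2 q hq

theorem pathToRoot_root (r : ι) : hT.pathToRoot r r = .nil := (hT.eq_pathToRoot .nil).symm

@[simp] theorem depth_root (r : ι) : hT.depth r r = 0 := by simp [depth, pathToRoot_root]

@[simp] theorem parent_root (r : ι) : hT.parent r r = r := by simp [parent, pathToRoot_root]

theorem pathToRoot_eq_cons {r i : ι} (hi : i ≠ r) : ∃ h : T.Adj i (hT.parent r i),
    hT.pathToRoot r i = .cons h (hT.pathToRoot r (hT.parent r i)) := by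
  rcases hp : hT.pathToRoot r i with _ | @⟨_, j, _, h, q⟩
  · exact absurd rfl hi
  · have hq : q.IsPath := (hp ▸ hT.isPath_pathToRoot r i).of_cons
    obtain rfl : hT.parent r i = j := by simp [parent, hp]
    exact ⟨h, by rw [hT.eq_pathToRoot hq]⟩

theorem adj_parent {r i : ι} (hi : i ≠ r) : T.Adj i (hT.parent r i) :=
  (hT.pathToRoot_eq_cons hi).1

theorem depth_parent_add_one {r i : ι} (hi : i ≠ r) :
    hT.depth r (hT.parent r i) + 1 = hT.depth r i := by
  obtain ⟨h, hP⟩ := hT.pathToRoot_eq_cons hi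
  simp [depth, hP]

theorem support_pathToRoot_of_ne {r i : ι} (hi : i ≠ r) :
    (hT.pathToRoot r i).support = i :: (hT.pathToRoot r (hT.parent r i)).support := by
  obtain ⟨h, hP⟩ := hT.pathToRoot_eq_cons hi
  rw [hP, Walk.support_cons]

theorem parent_mem_support (r i : ι) : hT.parent r i ∈ (hT.pathToRoot r i).support := by
  by_cases hi : i = r
  · simp [hi]
  · simp [hT.support_pathToRoot_of_ne hi]

theorem depth_lt_card [Fintype ι] (r i : ι) : hT.depth r i < Fintype.card ι := by
  simpa [depth] using (hT.isPath_pathToRoot r i).support_nodup.length_le_card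

theorem induction_on_parent (r : ι) {p : ι → Prop} (root : p r)
    (step : ∀ i, i ≠ r → p (hT.parent r i) → p i) (i : ι) : p i := by
  induction h : hT.depth r i generalizing i with
  | zero => rwa [Walk.eq_of_length_eq_zero h]
  | succ n ih =>
    have hi : i ≠ r := by rintro rfl; simp at h
    exact step i hi (ih _ (by have := hT.depth_parent_add_one hi; omega))

variable [DecidableEq ι]

theorem pathToRoot_dropUntil {r c j : ι} (h : c ∈ (hT.pathToRoot r j).support) :
    (hT.pathToRoot r j).dropUntil c h = hT.pathToRoot r c :=
  hT.eq_pathToRoot ((hT.isPath_pathToRoot r j).dropUntil h)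

theorem support_pathToRoot_subset {r c j : ι} (h : c ∈ (hT.pathToRoot r j).support) :
    (hT.pathToRoot r c).support ⊆ (hT.pathToRoot r j).support :=
  hT.pathToRoot_dropUntil h ▸ Walk.support_dropUntil_subset_support _ h

theorem depth_lt_of_mem_support {r c j : ι} (h : c ∈ (hT.pathToRoot r j).support)
    (hne : c ≠ j) : hT.depth r c < hT.depth r j := by
  have hlen := congrArg Walk.length (Walk.take_spec (hT.pathToRoot r j) h)
  have htake : ((hT.pathToRoot r j).takeUntil c h).length ≠ 0 :=
    fun h0 => hne (Walk.eq_of_length_eq_zero h0).symm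
  rw [Walk.length_append, hT.pathToRoot_dropUntil h] at hlen
  unfold depth
  omega

theorem eq_parent_or_eq_parent_of_adj (r : ι) {i j : ι} (h : T.Adj i j) :
    j = hT.parent r i ∨ i = hT.parent r j := by
  by_cases hj : j ∈ (hT.pathToRoot r i).support
  · left
    have htake : (hT.pathToRoot r i).takeUntil j hj = Walk.cons h .nil :=
      (hT.existsUnique_path i j).unique ((hT.isPath_pathToRoot r i).takeUntil hj) (by simp [h.ne])
    have hspec := Walk.take_spec (hT.pathToRoot r i) hj
    rw [htake] at hspec
    rw [parent, ← hspec]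
    simp
  · right
    rw [parent, ← hT.eq_pathToRoot ((hT.isPath_pathToRoot r i).cons hj (h := h.symm))]
    simp

theorem eq_parent_of_adj_of_mem_support {r x y c : ι} (h : T.Adj x y)
    (hx : c ∈ (hT.pathToRoot r x).support) (hy : c ∉ (hT.pathToRoot r y).support) :
    y = hT.parent r c := by
  rcases hT.eq_parent_or_eq_parent_of_adj r h with rfl | rfl
  · have hxr : x ≠ r := by
      rintro rfl
      exact h.ne (hT.parent_root x).symm
    rw [hT.support_pathToRoot_of_ne hxr] at hx
    obtain rfl : c = x := (List.mem_cons.1 hx).resolve_right hy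
    rfl
  · exact absurd (hT.support_pathToRoot_subset (hT.parent_mem_support r y) hx) hy

theorem parent_mem_of_preconnected {r : ι} {S : Set ι} (hS : (T.induce S).Preconnected)
    {j j' c : ι} (hj : j ∈ S) (hj' : j' ∈ S) (hc : c ∈ (hT.pathToRoot r j).support)
    (hc' : c ∉ (hT.pathToRoot r j').support) : hT.parent r c ∈ S := by
  suffices ∀ (a b : S), (T.induce S).Walk a b → c ∈ (hT.pathToRoot r a).support →
      c ∉ (hT.pathToRoot r b).support → hT.parent r c ∈ S from
    (hS ⟨j, hj⟩ ⟨j', hj'⟩).elim fun w => this _ _ w hc hc'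
  intro a b w
  induction w with
  | nil => exact fun ha hb => absurd ha hb
  | @cons a x b hadj _ ih =>
    intro ha hb
    by_cases hx : c ∈ (hT.pathToRoot r x).support
    · exact ih hx hb
    · exact hT.eq_parent_of_adj_of_mem_support hadj ha hx ▸ x.2

section Contraction

variable [Fintype ι]

noncomputable def children (r i : ι) : Finset ι := {c | c ≠ r ∧ hT.parent r c = i}

theorem mem_children {r c i : ι} : c ∈ hT.children r i ↔ c ≠ r ∧ hT.parent r c = i := by
  simp [children]

theorem depth_lt_of_mem_children {r c i : ι} (hc : c ∈ hT.children r i) :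
    hT.depth r i < hT.depth r c := by
  obtain ⟨hcr, rfl⟩ := hT.mem_children.1 hc
  have := hT.depth_parent_add_one hcr
  omega

theorem card_children_le_two [DecidableRel T.Adj] {r : ι} (hr : T.degree r ≤ 2)
    (hdeg : ∀ i, i ≠ r → T.degree i ≤ 3) (i : ι) : #(hT.children r i) ≤ 2 := by
  have hsub : hT.children r i ⊆ T.neighborFinset i := fun c hc => by
    obtain ⟨hcr, rfl⟩ := hT.mem_children.1 hc
    exact (mem_neighborFinset _ _ _).2 (hT.adj_parent hcr).symm
  by_cases hi : i = r
  · subst hi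
    exact (card_le_card hsub).trans ((card_neighborFinset_eq_degree T i).symm ▸ hr)
  · have hparent : hT.parent r i ∉ hT.children r i := fun h => by
      have := hT.depth_lt_of_mem_children h
      have := hT.depth_parent_add_one hi
      omega
    have := card_le_card (insert_subset ((mem_neighborFinset _ _ _).2 (hT.adj_parent hi)) hsub)
    rw [card_insert_of_notMem hparent, card_neighborFinset_eq_degree] at this
    have := hdeg i hi
    omega

variable {W : Type*} [DecidableEq W]

noncomputable def mergedBag (r : ι) (bags : ι → Finset W) (t : ℕ) (i : ι) : Finset W :=
  bags i ∪ (hT.children r i).attach.biUnion fun c =>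
    if #(mergedBag r bags t c) ≤ 2 * t then mergedBag r bags t c else ∅
termination_by Fintype.card ι - hT.depth r i
decreasing_by
  have := hT.depth_lt_of_mem_children c.2
  have := hT.depth_lt_card r c.1
  omega

variable {r : ι} {bags : ι → Finset W} {t : ℕ}

theorem subset_mergedBag (i : ι) : bags i ⊆ hT.mergedBag r bags t i := by
  rw [mergedBag]
  exact subset_union_left

theorem mergedBag_subset_parent {i : ι} (hi : i ≠ r)
    (hsmall : #(hT.mergedBag r bags t i) ≤ 2 * t) :
    hT.mergedBag r bags t i ⊆ hT.mergedBag r bags t (hT.parent r i) := by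
  intro v hv
  rw [mergedBag]
  exact mem_union_right _ <| mem_biUnion.2
    ⟨⟨i, hT.mem_children.2 ⟨hi, rfl⟩⟩, mem_attach _ _, by simpa [hsmall] using hv⟩

theorem card_mergedBag_le (hbag : ∀ i, #(bags i) ≤ t) {i : ι} (hi : #(hT.children r i) ≤ 2) :
    #(hT.mergedBag r bags t i) ≤ 5 * t := by
  rw [mergedBag]
  calc _ ≤ #(bags i) + ∑ c ∈ (hT.children r i).attach,
          #(if #(hT.mergedBag r bags t c) ≤ 2 * t then hT.mergedBag r bags t c else ∅) :=
        (card_union_le _ _).trans (Nat.add_le_add_left card_biUnion_le _)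
    _ ≤ t + #(hT.children r i).attach * (2 * t) := by
        refine Nat.add_le_add (hbag i) (sum_le_card_nsmul _ _ _ fun c _ => ?_)
        split_ifs with h
        · exact h
        · simp
    _ ≤ 5 * t := by
        rw [card_attach]
        nlinarith

variable (r bags t) in
def IsKept (i : ι) : Prop := i = r ∨ 2 * t < #(hT.mergedBag r bags t i)

noncomputable instance : DecidablePred (hT.IsKept r bags t) := fun _ => instDecidableOr

variable (r bags t) in
noncomputable def keptAncestor (i : ι) : ι :=
  if hT.IsKept r bags t i then i else keptAncestor (hT.parent r i)
termination_by hT.depth r i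
decreasing_by
  have := hT.depth_parent_add_one fun h : i = r => ‹¬_› (Or.inl h)
  omega

theorem isKept_root : hT.IsKept r bags t r := .inl rfl

theorem keptAncestor_of_isKept {i : ι} (hi : hT.IsKept r bags t i) :
    hT.keptAncestor r bags t i = i := by
  rw [keptAncestor, if_pos hi]

theorem keptAncestor_of_not_isKept {i : ι} (hi : ¬hT.IsKept r bags t i) :
    hT.keptAncestor r bags t i = hT.keptAncestor r bags t (hT.parent r i) := by
  rw [keptAncestor, if_neg hi]

theorem isKept_keptAncestor (i : ι) : hT.IsKept r bags t (hT.keptAncestor r bags t i) := by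
  induction i using hT.induction_on_parent r with
  | root =>
    rw [hT.keptAncestor_of_isKept hT.isKept_root]
    exact hT.isKept_root
  | step i _ ih =>
    by_cases hi : hT.IsKept r bags t i
    · rwa [hT.keptAncestor_of_isKept hi]
    · rwa [hT.keptAncestor_of_not_isKept hi]

theorem keptAncestor_mem_support (i : ι) :
    hT.keptAncestor r bags t i ∈ (hT.pathToRoot r i).support := by
  induction i using hT.induction_on_parent r with
  | root => simp [hT.keptAncestor_of_isKept hT.isKept_root]
  | step i hir ih =>
    by_cases hi : hT.IsKept r bags t i
    · simp [hT.keptAncestor_of_isKept hi]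
    · rw [hT.keptAncestor_of_not_isKept hi, hT.support_pathToRoot_of_ne hir]
      exact List.mem_cons_of_mem _ ih

theorem depth_keptAncestor_le (i : ι) :
    hT.depth r (hT.keptAncestor r bags t i) ≤ hT.depth r i := by
  by_cases h : hT.keptAncestor r bags t i = i
  · rw [h]
  · exact (hT.depth_lt_of_mem_support (hT.keptAncestor_mem_support i) h).le

theorem mem_support_keptAncestor {k j : ι} (hk : hT.IsKept r bags t k)
    (hj : k ∈ (hT.pathToRoot r j).support) :
    k ∈ (hT.pathToRoot r (hT.keptAncestor r bags t j)).support := by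
  induction j using hT.induction_on_parent r with
  | root => rwa [hT.keptAncestor_of_isKept hT.isKept_root]
  | step j hjr ih =>
    by_cases hjk : hT.IsKept r bags t j
    · rwa [hT.keptAncestor_of_isKept hjk]
    · rw [hT.support_pathToRoot_of_ne hjr] at hj
      rw [hT.keptAncestor_of_not_isKept hjk]
      exact ih ((List.mem_cons.1 hj).resolve_left fun h => hjk (h ▸ hk))

theorem mergedBag_subset_keptAncestor (i : ι) :
    hT.mergedBag r bags t i ⊆ hT.mergedBag r bags t (hT.keptAncestor r bags t i) := by
  induction i using hT.induction_on_parent r with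
  | root => rw [hT.keptAncestor_of_isKept hT.isKept_root]
  | step i hir ih =>
    by_cases hi : hT.IsKept r bags t i
    · rw [hT.keptAncestor_of_isKept hi]
    · rw [hT.keptAncestor_of_not_isKept hi]
      exact (hT.mergedBag_subset_parent hir (by simpa [IsKept, hir] using hi)).trans ih

theorem exists_mem_bags_of_mem_mergedBag {v : W} {i : ι} (hv : v ∈ hT.mergedBag r bags t i) :
    ∃ j, v ∈ bags j ∧ hT.keptAncestor r bags t j = hT.keptAncestor r bags t i ∧
      i ∈ (hT.pathToRoot r j).support := by
  rw [mergedBag] at hv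
  obtain hv | hv := mem_union.1 hv
  · exact ⟨i, hv, rfl, Walk.start_mem_support _⟩
  obtain ⟨⟨c, hc⟩, -, hvc⟩ := mem_biUnion.1 hv
  obtain ⟨hcr, hci⟩ := hT.mem_children.1 hc
  split_ifs at hvc with hsmall
  · dsimp only at hsmall hvc
    have hnk : ¬hT.IsKept r bags t c := by
      rintro (h | h)
      exacts [hcr h, by omega]
    obtain ⟨j, hj, hjc, hcj⟩ := exists_mem_bags_of_mem_mergedBag hvc
    refine ⟨j, hj, by rw [hjc, hT.keptAncestor_of_not_isKept hnk, hci], ?_⟩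
    exact hT.support_pathToRoot_subset hcj (hci ▸ hT.parent_mem_support r c)
  · simp at hvc
termination_by Fintype.card ι - hT.depth r i
decreasing_by
  have := hT.depth_lt_of_mem_children hc
  have := hT.depth_lt_card r c
  omega

variable (r bags t) in
noncomputable def toKept (i : ι) : {i // hT.IsKept r bags t i} :=
  ⟨hT.keptAncestor r bags t i, hT.isKept_keptAncestor i⟩

variable (r bags t) in
noncomputable def contractedTree : SimpleGraph {i // hT.IsKept r bags t i} :=
  fromRel fun a b => hT.toKept r bags t (hT.parent r a) = b

variable (r t) in
theorem mem_mergedBag_toKept {v : W} {i : ι} (hv : v ∈ bags i) :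
    v ∈ hT.mergedBag r bags t (hT.toKept r bags t i) :=
  hT.mergedBag_subset_keptAncestor i (hT.subset_mergedBag i hv)

theorem isTree_contractedTree : (hT.contractedTree r bags t).IsTree := by
  refine isTree_fromRel_of_parent _ (fun a => hT.depth r a) (root := ⟨r, hT.isKept_root⟩)
    (Subtype.ext ?_) fun a ha => ?_
  · simp [toKept, hT.keptAncestor_of_isKept hT.isKept_root]
  · have := hT.depth_parent_add_one (r := r) fun h => ha (Subtype.ext h)
    exact (hT.depth_keptAncestor_le _).trans_lt (by omega)

theorem toKept_eq_or_adj_of_adj {x y : ι} (h : T.Adj x y) :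
    hT.toKept r bags t x = hT.toKept r bags t y ∨
      (hT.contractedTree r bags t).Adj (hT.toKept r bags t x) (hT.toKept r bags t y) := by
  suffices ∀ x, hT.toKept r bags t x = hT.toKept r bags t (hT.parent r x) ∨
      (hT.contractedTree r bags t).Adj (hT.toKept r bags t x)
        (hT.toKept r bags t (hT.parent r x)) by
    rcases hT.eq_parent_or_eq_parent_of_adj r h with rfl | rfl
    exacts [this x, (this y).imp Eq.symm Adj.symm]
  intro x
  by_cases hx : hT.IsKept r bags t x
  · refine or_iff_not_imp_left.2 fun hne => (fromRel_adj _ _ _).2 ⟨hne, .inl ?_⟩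
    simp [toKept, hT.keptAncestor_of_isKept hx]
  · exact .inl (Subtype.ext (hT.keptAncestor_of_not_isKept hx))

theorem lt_card_mergedBag_sdiff (hbag : ∀ i, #(bags i) ≤ t) {c : ι} (hc : hT.IsKept r bags t c)
    (hcr : c ≠ r) : t < #(hT.mergedBag r bags t c \ bags (hT.parent r c)) := by
  have := le_card_sdiff (bags (hT.parent r c)) (hT.mergedBag r bags t c)
  have := hbag (hT.parent r c)
  have := hc.resolve_left hcr
  omega

/-- If `v` is in the merged bag of `c` but not in the bag of its parent, the connectivity of the
bags containing `v` confines them below `c`; two distinct kept nodes cannot both have this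
property, as each would lie below the other. -/
theorem disjoint_mergedBag_sdiff (hsub : ∀ v, (T.induce {i | v ∈ bags i}).Preconnected)
    {c c' : ι} (hc : hT.IsKept r bags t c) (hc' : hT.IsKept r bags t c') (hne : c ≠ c') :
    Disjoint (hT.mergedBag r bags t c \ bags (hT.parent r c))
      (hT.mergedBag r bags t c' \ bags (hT.parent r c')) := by
  refine Finset.disjoint_left.2 fun v hmem hmem' => ?_
  obtain ⟨hvc, hvp⟩ := mem_sdiff.1 hmem
  obtain ⟨hvc', hvp'⟩ := mem_sdiff.1 hmem'
  obtain ⟨j, hj, hjc, hcj⟩ := hT.exists_mem_bags_of_mem_mergedBag hvc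
  obtain ⟨j', hj', hjc', hc'j'⟩ := hT.exists_mem_bags_of_mem_mergedBag hvc'
  rw [hT.keptAncestor_of_isKept hc] at hjc
  rw [hT.keptAncestor_of_isKept hc'] at hjc'
  have hcj' : c ∈ (hT.pathToRoot r j').support := by
    by_contra h
    exact hvp (hT.parent_mem_of_preconnected (hsub v) hj hj' hcj h)
  have hc'j : c' ∈ (hT.pathToRoot r j).support := by
    by_contra h
    exact hvp' (hT.parent_mem_of_preconnected (hsub v) hj' hj hc'j' h)
  have := hT.depth_lt_of_mem_support (hjc' ▸ hT.mem_support_keptAncestor hc hcj') hne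
  have := hT.depth_lt_of_mem_support (hjc ▸ hT.mem_support_keptAncestor hc' hc'j) hne.symm
  omega

theorem card_isKept_le (ht : 0 < t) (hbag : ∀ i, #(bags i) ≤ t)
    (hsub : ∀ v, (T.induce {i | v ∈ bags i}).Preconnected) [Fintype W] :
    Fintype.card {i // hT.IsKept r bags t i} ≤ Fintype.card W / t + 1 := by
  set K : Finset ι := {c | hT.IsKept r bags t c ∧ c ≠ r}
  have hK : #K * t ≤ Fintype.card W := calc
    #K * t ≤ ∑ c ∈ K, #(hT.mergedBag r bags t c \ bags (hT.parent r c)) := by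
      rw [← smul_eq_mul]
      refine card_nsmul_le_sum _ _ _ fun c hc => ?_
      have := mem_filter.1 hc
      exact (hT.lt_card_mergedBag_sdiff hbag this.2.1 this.2.2).le
    _ = #(K.biUnion fun c => hT.mergedBag r bags t c \ bags (hT.parent r c)) :=
      (card_biUnion fun c hc c' hc' hne =>
        hT.disjoint_mergedBag_sdiff hsub (mem_filter.1 hc).2.1 (mem_filter.1 hc').2.1 hne).symm
    _ ≤ Fintype.card W := card_le_univ _
  have hkept : Fintype.card {i // hT.IsKept r bags t i} ≤ #K + 1 := by
    rw [Fintype.card_subtype]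
    refine (card_le_card fun i hi => ?_).trans (card_insert_le r K)
    by_cases hir : i = r
    · simp [hir]
    · simp_all [K]
  have := (Nat.le_div_iff_mul_le ht).2 hK
  omega

end Contraction

end IsTree

end SimpleGraph

theorem IsTreeDecomp.contract {V ι : Type} [Fintype ι] [DecidableEq ι] [DecidableEq V]
    {G : SimpleGraph V} {T : SimpleGraph ι} {bags : ι → Finset V} (hT : IsTreeDecomp G T bags)
    (r : ι) (t : ℕ) :
    IsTreeDecomp G (hT.isTree.contractedTree r bags t) fun a => hT.isTree.mergedBag r bags t a where
  isTree := hT.isTree.isTree_contractedTree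
  mem_bag v :=
    let ⟨_, hi⟩ := hT.mem_bag v
    ⟨_, hT.isTree.mem_mergedBag_toKept r t hi⟩
  edge_bag u v huv :=
    let ⟨_, hu, hv⟩ := hT.edge_bag u v huv
    ⟨_, hT.isTree.mem_mergedBag_toKept r t hu, hT.isTree.mem_mergedBag_toKept r t hv⟩
  subtree v := by
    refine (hT.subtree v).of_adj_or_eq_of_surjective
      (fun j => ⟨hT.isTree.toKept r bags t j, hT.isTree.mem_mergedBag_toKept r t j.2⟩)
      (fun a => ?_) fun x y hxy => ?_
    · obtain ⟨j, hj, hja, -⟩ := hT.isTree.exists_mem_bags_of_mem_mergedBag a.2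
      rw [hT.isTree.keptAncestor_of_isKept a.1.2] at hja
      exact ⟨⟨j, hj⟩, Subtype.ext (Subtype.ext hja)⟩
    · exact (hT.isTree.toKept_eq_or_adj_of_adj hxy).imp Subtype.ext id

theorem exists_coarse_tree_decomp_general {V ι : Type} [Fintype V] [Fintype ι]
    (G : SimpleGraph V) (T : SimpleGraph ι) [DecidableRel T.Adj]
    (bags : ι → Finset V) (hT : IsTreeDecomp G T bags)
    (t : ℕ) (ht : 0 < t)
    (hroot : ∃ r : ι, T.degree r ≤ 2 ∧ ∀ i : ι, i ≠ r → T.degree i ≤ 3)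
    (hbag : ∀ i, (bags i).card ≤ t) :
    ∃ (ι' : Type) (_ : Fintype ι') (T' : SimpleGraph ι') (bags' : ι' → Finset V),
      IsTreeDecomp G T' bags' ∧
      Fintype.card ι' ≤ Fintype.card V / t + 1 ∧
      ∀ i, (bags' i).card ≤ 5 * t := by
  classical
  obtain ⟨r, hr, hdeg⟩ := hroot
  exact ⟨_, inferInstance, _, _, hT.contract r t,
    hT.isTree.card_isKept_le ht hbag fun v => (hT.subtree v).preconnected,
    fun a => hT.isTree.card_mergedBag_le hbag (hT.isTree.card_children_le_two hr hdeg a)⟩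

/-- Given a (nice) tree decomposition of a graph `G` on `n` vertices, rooted so
that every node has at most two children (formalized: some root has degree at most
`2` and all other nodes have degree at most `3`) and with all bags of size at most
`t`, there is a tree decomposition of `G` with at most `n / t` edges — hence at
most `n / t + 1` nodes — all of whose bags have size at most `5 t`. -/
theorem exists_coarse_tree_decomp {V ι : Type} [Fintype V] [Fintype ι] [DecidableEq ι]
    (G : SimpleGraph V) (T : SimpleGraph ι) [DecidableRel T.Adj]
    (bags : ι → Finset V) (hT : IsTreeDecomp G T bags)
    (t : ℕ) (ht : 0 < t)
    (hroot : ∃ r : ι, T.degree r ≤ 2 ∧ ∀ i : ι, i ≠ r → T.degree i ≤ 3)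
    (hbag : ∀ i, (bags i).card ≤ t) :
    ∃ (ι' : Type) (_ : Fintype ι') (T' : SimpleGraph ι') (bags' : ι' → Finset V),
      IsTreeDecomp G T' bags' ∧
      Fintype.card ι' ≤ Fintype.card V / t + 1 ∧
      ∀ i, (bags' i).card ≤ 5 * t :=
  exists_coarse_tree_decomp_general G T bags hT t ht hroot hbag
end

section
/- Let T : ℕ → ℝ≥0 satisfy T(n) ≤ T(n_1) + T(n_2) + K·n for all sufficiently large n, where n_1 + n_2 ≤ n + β√n and (1−α)n ≤ n_1, n_2 ≤ αn + β√n for constants 1/2 < α < 1, β > 0, K > 0, and T bounded on any finite initial segment. Then T(n) = O(n log n): there exist constants c_1, c_2 such that T(n) ≤ c_1 n log₂ n + c_2 n for all n ≥ 1. -/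
/-!
Fix `α < a < 1`. For large `n` the overlap `β√n` is negligible, so both parts have size at
most `a n` and hence `log₂ nᵢ ≤ log₂ n - δ` with `δ = -log₂ a > 0`. Inserting the bound
`c₁ m log₂ m + c₂ m` for the two parts therefore gains `c₁ δ n`, and loses only `K n` and the
`O(√n log n)` coming from the overlap; once `c₁ ≥ max c₂ (2K/δ)` the gain wins, while `c₂`
covers the finitely many small `n`.
-/

open Filter Real Asymptotics

noncomputable def nlognBound (c₁ c₂ x : ℝ) : ℝ := c₁ * x * logb 2 x + c₂ * x

lemma isLittleO_logb_add_one_sqrt (b : ℝ) : (fun x => logb b x + 1) =o[atTop] sqrt := by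
  have hlog : logb b =o[atTop] sqrt := by
    rw [show logb b = fun x => (log b)⁻¹ * log x from funext fun x => (inv_mul_eq_div _ _).symm,
      show sqrt = fun x => x ^ (1 / 2 : ℝ) from funext sqrt_eq_rpow]
    exact (isLittleO_log_rpow_atTop one_half_pos).const_mul_left _
  have hone : (fun _ => (1 : ℝ)) =o[atTop] sqrt := by
    rw [isLittleO_one_left_iff]
    exact tendsto_norm_atTop_atTop.comp tendsto_sqrt_atTop
  exact hlog.add hone

lemma isLittleO_sqrt_mul_logb_add_one_id (b : ℝ) :
    (fun x => √x * (logb b x + 1)) =o[atTop] id := by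
  refine ((isBigO_refl sqrt atTop).mul_isLittleO (isLittleO_logb_add_one_sqrt b)).congr' ?_ ?_
  · rfl
  · filter_upwards [eventually_ge_atTop 0] with x hx using mul_self_sqrt hx

lemma eventually_mul_sqrt_mul_logb_add_one_le (b c : ℝ) {ε : ℝ} (hε : 0 < ε) :
    ∀ᶠ n : ℕ in atTop, c * (√n * (logb b n + 1)) ≤ ε * n := by
  filter_upwards [((isLittleO_sqrt_mul_logb_add_one_id b).const_mul_left c).natCast_atTop.bound hε]
    with n hn
  simpa using (le_abs_self _).trans hn

lemma logb_le_logb_add_logb_of_le_mul {b a m n : ℝ} (hb : 1 < b) (ha : 0 < a) (hm : 0 < m)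
    (hma : m ≤ a * n) : logb b m ≤ logb b n + logb b a := by
  have hn : 0 < n := pos_of_mul_pos_right (hm.trans_le hma) ha.le
  rw [add_comm, ← logb_mul ha.ne' hn.ne']
  exact logb_le_logb_of_le hb hm hma

-- The `+ 1` in `hslack` pays for the `c₂ r` term, via `c₂ ≤ c₁`.
lemma nlognBound_add_nlognBound_add_le {a c₁ c₂ K n r m₁ m₂ : ℝ} (ha0 : 0 < a) (ha1 : a ≤ 1)
    (hc₂ : 0 ≤ c₂) (hc₂₁ : c₂ ≤ c₁) (hm₁ : 1 ≤ m₁) (hm₂ : 1 ≤ m₂) (hm₁a : m₁ ≤ a * n)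
    (hm₂a : m₂ ≤ a * n) (hsum : m₁ + m₂ ≤ n + r) (hr : 0 ≤ r)
    (hslack : c₁ * (r * (logb 2 n + 1)) + K * n ≤ c₁ * -logb 2 a * n) :
    nlognBound c₁ c₂ m₁ + nlognBound c₁ c₂ m₂ + K * n ≤ nlognBound c₁ c₂ n := by
  unfold nlognBound
  have hc₁ : 0 ≤ c₁ := hc₂.trans hc₂₁
  set L' := logb 2 n + logb 2 a
  have hL₁ : logb 2 m₁ ≤ L' := logb_le_logb_add_logb_of_le_mul one_lt_two ha0 (by linarith) hm₁a
  have hL₂ : logb 2 m₂ ≤ L' := logb_le_logb_add_logb_of_le_mul one_lt_two ha0 (by linarith) hm₂a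
  have hL' : 0 ≤ L' := (logb_nonneg one_lt_two hm₁).trans hL₁
  have hloga : logb 2 a ≤ 0 := logb_nonpos one_lt_two ha0.le ha1
  calc c₁ * m₁ * logb 2 m₁ + c₂ * m₁ + (c₁ * m₂ * logb 2 m₂ + c₂ * m₂) + K * n
      ≤ (c₁ * L' + c₂) * (m₁ + m₂) + K * n := by
        have := mul_le_mul_of_nonneg_left hL₁ (mul_nonneg hc₁ (by linarith : (0 : ℝ) ≤ m₁))
        have := mul_le_mul_of_nonneg_left hL₂ (mul_nonneg hc₁ (by linarith : (0 : ℝ) ≤ m₂))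
        linarith
    _ ≤ (c₁ * L' + c₂) * (n + r) + K * n := by gcongr
    _ ≤ c₁ * n * logb 2 n + c₂ * n + c₁ * logb 2 a * n + c₁ * (r * (logb 2 n + 1)) + K * n := by
        have : c₁ * r * logb 2 a ≤ 0 := mul_nonpos_of_nonneg_of_nonpos (by positivity) hloga
        nlinarith [mul_le_mul_of_nonneg_right hc₂₁ hr]
    _ ≤ c₁ * n * logb 2 n + c₂ * n := by linarith

theorem le_nlognBound_of_split {T : ℕ → ℝ} {r : ℕ → ℝ} {a c₁ c₂ K : ℝ} {n₀ : ℕ}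
    (ha0 : 0 < a) (ha1 : a < 1) (hc₂ : 0 ≤ c₂) (hc₂₁ : c₂ ≤ c₁) (hbase : ∀ n < n₀, T n ≤ c₂)
    (hstep : ∀ n, n₀ ≤ n → 0 ≤ r n ∧
      c₁ * (r n * (logb 2 n + 1)) + K * n ≤ c₁ * -logb 2 a * n ∧
      ∃ n₁ n₂ : ℕ, 1 ≤ n₁ ∧ 1 ≤ n₂ ∧ (n₁ : ℝ) ≤ a * n ∧ (n₂ : ℝ) ≤ a * n ∧
        (n₁ : ℝ) + n₂ ≤ n + r n ∧ T n ≤ T n₁ + T n₂ + K * n)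
    (n : ℕ) (hn : 1 ≤ n) : T n ≤ nlognBound c₁ c₂ n := by
  induction n using Nat.strong_induction_on with
  | _ n ih =>
  have hn' : (1 : ℝ) ≤ n := by exact_mod_cast hn
  rcases lt_or_ge n n₀ with hlt | hge
  · have : 0 ≤ c₁ * n * logb 2 n := mul_nonneg (by nlinarith) (logb_nonneg one_lt_two hn')
    unfold nlognBound
    nlinarith [hbase n hlt]
  obtain ⟨hr, hslack, n₁, n₂, hn₁, hn₂, hn₁a, hn₂a, hsum, hT⟩ := hstep n hge
  have hlt : ∀ m : ℕ, (m : ℝ) ≤ a * n → m < n := fun m hm => by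
    have : a * n < n := by nlinarith
    exact_mod_cast hm.trans_lt this
  have := nlognBound_add_nlognBound_add_le ha0 ha1.le hc₂ hc₂₁ (by exact_mod_cast hn₁)
    (by exact_mod_cast hn₂) hn₁a hn₂a hsum hr hslack
  linarith [ih n₁ (hlt n₁ hn₁a) hn₁, ih n₂ (hlt n₂ hn₂a) hn₂]

theorem separator_recurrence_nlogn_general (T : ℕ → ℝ)
    (α β K : ℝ) (N : ℕ)
    (hα1 : 1 / 2 < α) (hα2 : α < 1) (hβ : 0 < β)
    (hrec : ∀ n : ℕ, N ≤ n → ∃ n₁ n₂ : ℕ,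
      (n₁ : ℝ) + n₂ ≤ n + β * Real.sqrt n ∧
      (1 - α) * n ≤ n₁ ∧ (n₁ : ℝ) ≤ α * n + β * Real.sqrt n ∧
      (1 - α) * n ≤ n₂ ∧ (n₂ : ℝ) ≤ α * n + β * Real.sqrt n ∧
      T n ≤ T n₁ + T n₂ + K * n) :
    ∃ c₁ c₂ : ℝ, ∀ n : ℕ, 1 ≤ n → T n ≤ c₁ * n * Real.logb 2 n + c₂ * n := by
  obtain ⟨a, hαa, ha1⟩ := exists_between hα2
  have hδ : 0 < -logb 2 a := neg_pos.2 (logb_neg one_lt_two (by linarith) ha1)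
  obtain ⟨n₀, hn₀⟩ := eventually_atTop.1 <| (eventually_ge_atTop (max N 1)).and <|
    ((tendsto_natCast_atTop_atTop.const_mul_atTop (sub_pos.2 hα2)).eventually_ge_atTop 1).and <|
    (eventually_mul_sqrt_mul_logb_add_one_le 2 β (sub_pos.2 hαa)).and
    (eventually_mul_sqrt_mul_logb_add_one_le 2 β (half_pos hδ))
  obtain ⟨c₂, hc₂0, hc₂⟩ : ∃ c₂, 0 ≤ c₂ ∧ ∀ n < n₀, T n ≤ c₂ := by
    obtain ⟨C, hC⟩ := ((Set.finite_Iio n₀).image T).bddAbove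
    exact ⟨max C 0, le_max_right _ _, fun n hn => (hC ⟨n, hn, rfl⟩).trans (le_max_left _ _)⟩
  obtain ⟨c₁, hc₂₁, hKc₁⟩ : ∃ c₁, c₂ ≤ c₁ ∧ 2 * K ≤ c₁ * -logb 2 a :=
    ⟨max c₂ (2 * K / -logb 2 a), le_max_left _ _, (div_le_iff₀ hδ).1 (le_max_right _ _)⟩
  refine ⟨c₁, c₂, le_nlognBound_of_split (r := fun n => β * √n) (K := K) (by linarith) ha1 hc₂0
    hc₂₁ hc₂ fun n hn => ?_⟩
  obtain ⟨hN1, hα, hra, hrδ⟩ := hn₀ n hn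
  obtain ⟨n₁, n₂, hsum, h₁l, h₁u, h₂l, h₂u, hT⟩ := hrec n (le_of_max_le_left hN1)
  have hL : 0 ≤ logb 2 n := logb_nonneg one_lt_two (by exact_mod_cast le_of_max_le_right hN1)
  have hr : β * √n ≤ (a - α) * n := by
    nlinarith [mul_nonneg (mul_nonneg hβ.le (sqrt_nonneg (n : ℝ))) hL]
  refine ⟨by positivity, ?_, n₁, n₂, by exact_mod_cast hα.trans h₁l,
    by exact_mod_cast hα.trans h₂l, by linarith, by linarith, hsum, hT⟩
  nlinarith [mul_le_mul_of_nonneg_left hrδ (hc₂0.trans hc₂₁)]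

/-- The separator recurrence `T(n) ≤ T(n₁) + T(n₂) + K n` for all sufficiently large
`n`, with subproblem sizes `n₁ + n₂ ≤ n + β√n` and `(1−α)n ≤ n₁, n₂ ≤ αn + β√n`
(for constants `1/2 < α < 1`, `β, K > 0`), has solution `T(n) = O(n log n)`:
there are constants `c₁, c₂` with `T(n) ≤ c₁ n log₂ n + c₂ n` for all `n ≥ 1`. -/
theorem separator_recurrence_nlogn (T : ℕ → ℝ) (hT0 : ∀ n, 0 ≤ T n)
    (α β K : ℝ) (N : ℕ)
    (hα1 : 1 / 2 < α) (hα2 : α < 1) (hβ : 0 < β) (hK : 0 < K)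
    (hrec : ∀ n : ℕ, N ≤ n → ∃ n₁ n₂ : ℕ,
      (n₁ : ℝ) + n₂ ≤ n + β * Real.sqrt n ∧
      (1 - α) * n ≤ n₁ ∧ (n₁ : ℝ) ≤ α * n + β * Real.sqrt n ∧
      (1 - α) * n ≤ n₂ ∧ (n₂ : ℝ) ≤ α * n + β * Real.sqrt n ∧
      T n ≤ T n₁ + T n₂ + K * n) :
    ∃ c₁ c₂ : ℝ, ∀ n : ℕ, 1 ≤ n → T n ≤ c₁ * n * Real.logb 2 n + c₂ * n :=
  separator_recurrence_nlogn_general T α β K N hα1 hα2 hβ hrec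
end
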